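/- arXiv:2511.09327 — 3 statements merged into one kernel-verified Lean document; each statement's English description precedes it below -/
import Mathlib

section
/- If F : V → ℝ is convex on a finite-dimensional real inner product space V and satisfies the linear growth bounds c₁|z| − c₂ ≤ F(z) ≤ c₃(1 + |z|) for all z ∈ V (with constants c₁, c₃ > 0, c₂ ∈ ℝ), then F is globally Lipschitz on V. -/
open scoped NNReal

/-!
Along any ray `t ↦ x + t • (y - x)` a convex function has nondecreasing difference quotients,
so `f y - f x` is at most the average slope over `[0, t]`. The linear upper bound makes that
average slope at most `c * ‖y - x‖ + O(1 / t)`, and letting `t → ∞` bounds `f y - f x` by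
`c * ‖y - x‖`.
-/

section

variable {E : Type*} [NormedAddCommGroup E] [NormedSpace ℝ E] {f : E → ℝ}

lemma ConvexOn.mul_sub_le_sub_of_one_le (hf : ConvexOn ℝ Set.univ f) (x y : E) {t : ℝ}
    (ht : 1 ≤ t) : t * (f y - f x) ≤ f (x + t • (y - x)) - f x := by
  have ht0 : 0 < t := one_pos.trans_le ht
  have hy : (1 - t⁻¹) • x + t⁻¹ • (x + t • (y - x)) = y := by
    rw [smul_add, smul_smul, inv_mul_cancel₀ ht0.ne', one_smul]
    module
  have hconv := hf.2 (Set.mem_univ x) (Set.mem_univ (x + t • (y - x)))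
    (sub_nonneg.2 (inv_le_one_of_one_le₀ ht)) (inv_nonneg.2 ht0.le) (sub_add_cancel 1 t⁻¹)
  rw [hy, smul_eq_mul, smul_eq_mul] at hconv
  have := mul_le_mul_of_nonneg_left hconv ht0.le
  field_simp at this
  linarith

lemma ConvexOn.sub_le_mul_norm_sub_of_le_mul_one_add_norm (hf : ConvexOn ℝ Set.univ f)
    {c : ℝ} (hc : 0 ≤ c) (hup : ∀ z, f z ≤ c * (1 + ‖z‖)) (x y : E) :
    f y - f x ≤ c * ‖y - x‖ := by
  set A := c * (1 + ‖x‖) - f x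
  have hray : ∀ t : ℝ, 1 ≤ t → t * (f y - f x - c * ‖y - x‖) ≤ A := by
    intro t ht
    have hnorm : ‖x + t • (y - x)‖ ≤ ‖x‖ + t * ‖y - x‖ := by
      simpa [norm_smul, abs_of_pos (one_pos.trans_le ht)] using norm_add_le x (t • (y - x))
    have hw : f (x + t • (y - x)) ≤ c * (1 + ‖x‖ + t * ‖y - x‖) :=
      (hup _).trans (mul_le_mul_of_nonneg_left (by linarith) hc)
    nlinarith [hf.mul_sub_le_sub_of_one_le x y ht]
  by_contra! hlt
  have hA : 0 ≤ A := sub_nonneg.2 (hup x)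
  set d := f y - f x - c * ‖y - x‖
  have hd : 0 < d := by linarith
  have := hray (A / d + 1) (by linarith [div_nonneg hA hd.le])
  rw [add_mul, div_mul_cancel₀ A hd.ne'] at this
  linarith

end

theorem convex_linearGrowth_lipschitz_general
    {V : Type*} [NormedAddCommGroup V] [InnerProductSpace ℝ V]
    (F : V → ℝ) (hconv : ConvexOn ℝ Set.univ F)
    (c₃ : ℝ) (hc₃ : 0 < c₃)
    (hup : ∀ z : V, F z ≤ c₃ * (1 + ‖z‖)) :
    ∃ L : ℝ≥0, LipschitzWith L F := by
  refine ⟨c₃.toNNReal, LipschitzWith.of_le_add_mul' c₃ fun x y => ?_⟩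
  have := hconv.sub_le_mul_norm_sub_of_le_mul_one_add_norm hc₃.le hup y x
  rw [dist_eq_norm]
  linarith

/-- A convex function of linear growth on a finite-dimensional real inner product
space is globally Lipschitz. -/
theorem convex_linearGrowth_lipschitz
    {V : Type*} [NormedAddCommGroup V] [InnerProductSpace ℝ V] [FiniteDimensional ℝ V]
    (F : V → ℝ) (hconv : ConvexOn ℝ Set.univ F)
    (c₁ c₂ c₃ : ℝ) (hc₁ : 0 < c₁) (hc₃ : 0 < c₃)
    (hlow : ∀ z : V, c₁ * ‖z‖ - c₂ ≤ F z)
    (hup : ∀ z : V, F z ≤ c₃ * (1 + ‖z‖)) :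
    ∃ L : ℝ≥0, LipschitzWith L F :=
  convex_linearGrowth_lipschitz_general F hconv c₃ hc₃ hup
end

section
/- For F as below and F_ε(z) := √(ε + F(z)²), the radial derivative bound holds uniformly in ε: there exist constants c₄, c₆ > 0 and c₅ ∈ ℝ such that c₄|z| − c₅ ≤ ⟨F_ε'(z), z⟩ ≤ c₆(1 + |z|) for all z ∈ V and all 0 < ε < 1. -/
/-!
Off the origin, `⟨F_ε'(z), z⟩ = (F(z) / F_ε(z)) ⟨F'(z), z⟩` with `|F / F_ε| ≤ 1`. Convexity of `F`
along the ray through `z`, with `F(0) = 0`, traps the radial derivative: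
`F(z) ≤ ⟨F'(z), z⟩ ≤ F(2z) - F(z)`. The upper bound then follows from the linear growth of `|F|`.
Where `F(z) ≥ 0` one gets `⟨F_ε'(z), z⟩ ≥ F(z)² / F_ε(z) ≥ F(z) - √ε`; where `F(z) < 0` we have
`c₁|z| < c₂`, so `z` stays bounded and the lower bound follows from the upper one.
-/

open Set

theorem Real.abs_div_sqrt_add_sq_le_one {ε : ℝ} (hε : 0 ≤ ε) (a : ℝ) :
    |a / √(ε + a ^ 2)| ≤ 1 := by
  rw [abs_div, abs_of_nonneg (Real.sqrt_nonneg _)]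
  exact div_le_one_of_le₀ (Real.abs_le_sqrt (by linarith)) (Real.sqrt_nonneg _)

theorem Real.sub_sqrt_le_div_sqrt_add_sq_mul {ε a d : ℝ} (hε : 0 < ε) (ha : 0 ≤ a)
    (had : a ≤ d) : a - √ε ≤ a / √(ε + a ^ 2) * d := by
  set s := √(ε + a ^ 2)
  have hs : 0 < s := Real.sqrt_pos.2 (by positivity)
  have has : a ≤ s := Real.le_sqrt_of_sq_le (by linarith)
  have hsa : s ≤ a + √ε := by
    rw [Real.sqrt_le_left (by positivity)]
    nlinarith [Real.sq_sqrt hε.le, Real.sqrt_nonneg ε]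
  calc a - √ε ≤ a / s * a := by
        rw [div_mul_eq_mul_div, le_div_iff₀ hs]
        nlinarith [Real.sqrt_nonneg ε]
    _ ≤ a / s * d := by gcongr

theorem abs_le_add_abs_of_linear_bounds {E : Type*} [SeminormedAddCommGroup E] {f : E → ℝ}
    {c₁ c₂ c₃ : ℝ} (hc₁ : 0 ≤ c₁) (hc₃ : 0 ≤ c₃) {x : E} (hlow : c₁ * ‖x‖ - c₂ ≤ f x)
    (hup : f x ≤ c₃ * (1 + ‖x‖)) : |f x| ≤ c₃ * (1 + ‖x‖) + |c₂| := by
  have : 0 ≤ c₃ * (1 + ‖x‖) := by positivity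
  rw [abs_le]
  constructor <;> nlinarith [neg_abs_le c₂, le_abs_self c₂, norm_nonneg x]

section Regularization

variable {E : Type*} [NormedAddCommGroup E] [NormedSpace ℝ E] {f : E → ℝ} {f' : E →L[ℝ] ℝ}
  {x : E} {ε : ℝ}

theorem ConvexOn.fderiv_apply_sub_le (hf : ConvexOn ℝ univ f) (hd : HasFDerivAt f f' x)
    (y : E) : f' (y - x) ≤ f y - f x := by
  have hline : ConvexOn ℝ univ (f ∘ AffineMap.lineMap (k := ℝ) x y) := by
    simpa using hf.comp_affineMap (AffineMap.lineMap (k := ℝ) x y)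
  have hderiv : HasDerivAt (f ∘ AffineMap.lineMap (k := ℝ) x y) (f' (y - x)) 0 := by
    rw [← AffineMap.lineMap_apply_zero x y (k := ℝ)] at hd
    exact hd.comp_hasDerivAt 0 AffineMap.hasDerivAt_lineMap
  simpa [slope_def_field] using
    hline.le_slope_of_hasDerivAt (mem_univ 0) (mem_univ 1) one_pos hderiv

theorem ConvexOn.le_fderiv_apply_self (hf : ConvexOn ℝ univ f) (h0 : f 0 = 0)
    (hd : HasFDerivAt f f' x) : f x ≤ f' x := by
  simpa [h0] using hf.fderiv_apply_sub_le hd 0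

theorem ConvexOn.abs_fderiv_apply_self_le (hf : ConvexOn ℝ univ f) (h0 : f 0 = 0)
    (hd : HasFDerivAt f f' x) : |f' x| ≤ 2 * |f x| + |f ((2 : ℝ) • x)| := by
  have hlow := hf.le_fderiv_apply_self h0 hd
  have hup : f' x ≤ f ((2 : ℝ) • x) - f x := by
    simpa [two_smul] using hf.fderiv_apply_sub_le hd ((2 : ℝ) • x)
  rw [abs_le]
  constructor <;> linarith [neg_abs_le (f x), le_abs_self (f x), neg_abs_le (f ((2 : ℝ) • x)),
    le_abs_self (f ((2 : ℝ) • x))]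

theorem HasFDerivAt.sqrt_add_sq (hf : HasFDerivAt f f' x) (hε : 0 < ε) :
    HasFDerivAt (fun y => √(ε + f y ^ 2)) ((f x / √(ε + f x ^ 2)) • f') x := by
  refine (((hf.pow 2).const_add ε).sqrt (by positivity)).congr_fderiv ?_
  ext v
  simp only [smul_apply, smul_eq_mul]
  field_simp
  norm_num

theorem ConvexOn.abs_fderiv_sqrt_add_sq_apply_self_le (hf : ConvexOn ℝ univ f) (h0 : f 0 = 0)
    (hd : DifferentiableAt ℝ f x) (hε : 0 < ε) :
    |fderiv ℝ (fun y => √(ε + f y ^ 2)) x x| ≤ 2 * |f x| + |f ((2 : ℝ) • x)| := by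
  rw [(hd.hasFDerivAt.sqrt_add_sq hε).fderiv, smul_apply, smul_eq_mul, abs_mul]
  exact (mul_le_of_le_one_left (abs_nonneg _) (Real.abs_div_sqrt_add_sq_le_one hε.le _)).trans
    (hf.abs_fderiv_apply_self_le h0 hd.hasFDerivAt)

theorem ConvexOn.sub_sqrt_le_fderiv_sqrt_add_sq_apply_self (hf : ConvexOn ℝ univ f)
    (h0 : f 0 = 0) (hd : DifferentiableAt ℝ f x) (hε : 0 < ε) (hx : 0 ≤ f x) :
    f x - √ε ≤ fderiv ℝ (fun y => √(ε + f y ^ 2)) x x := by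
  rw [(hd.hasFDerivAt.sqrt_add_sq hε).fderiv, smul_apply, smul_eq_mul]
  exact Real.sub_sqrt_le_div_sqrt_add_sq_mul hε hx (hf.le_fderiv_apply_self h0 hd.hasFDerivAt)

end Regularization

theorem radial_derivative_bounds_general
    {V : Type*} [NormedAddCommGroup V] [InnerProductSpace ℝ V]
    (F : V → ℝ) (hconv : ConvexOn ℝ Set.univ F)
    (c₁ c₂ c₃ : ℝ) (hc₁ : 0 < c₁) (hc₃ : 0 < c₃)
    (hlow : ∀ z : V, c₁ * ‖z‖ - c₂ ≤ F z)
    (hup : ∀ z : V, F z ≤ c₃ * (1 + ‖z‖))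
    (hF0 : F 0 = 0)
    (hC1 : ContDiffOn ℝ 1 F ({(0 : V)}ᶜ)) :
    ∃ c₄ c₆ : ℝ, 0 < c₄ ∧ 0 < c₆ ∧ ∃ c₅ : ℝ,
      ∀ (ε : ℝ), 0 < ε → ε < 1 → ∀ z : V,
        c₄ * ‖z‖ - c₅ ≤ fderiv ℝ (fun w : V => Real.sqrt (ε + (F w) ^ 2)) z z ∧
        fderiv ℝ (fun w : V => Real.sqrt (ε + (F w) ^ 2)) z z ≤ c₆ * (1 + ‖z‖) := by
  set c₆ := 4 * c₃ + 3 * |c₂|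
  have hc₆ : 0 < c₆ := by positivity
  have hgrowth (z : V) := abs_le_add_abs_of_linear_bounds hc₁.le hc₃.le (hlow z) (hup z)
  refine ⟨c₁, c₆, hc₁, hc₆, |c₂| + 1 + c₆ * (1 + |c₂| / c₁), fun ε hε hε1 z => ?_⟩
  rcases eq_or_ne z 0 with rfl | hz
  · simp only [map_zero, norm_zero, mul_zero, zero_sub, add_zero, mul_one]
    constructor <;> nlinarith [abs_nonneg c₂, div_nonneg (abs_nonneg c₂) hc₁.le]
  have hd : DifferentiableAt ℝ F z :=
    (hC1.contDiffAt (isOpen_compl_singleton.mem_nhds hz)).differentiableAt one_ne_zero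
  have hupper : |fderiv ℝ (fun w => √(ε + F w ^ 2)) z z| ≤ c₆ * (1 + ‖z‖) := by
    refine (hconv.abs_fderiv_sqrt_add_sq_apply_self_le hF0 hd hε).trans ?_
    have h2z := hgrowth ((2 : ℝ) • z)
    rw [norm_smul, Real.norm_two] at h2z
    nlinarith [hgrowth z, abs_nonneg c₂, norm_nonneg z]
  refine ⟨?_, (le_abs_self _).trans hupper⟩
  rcases le_or_gt 0 (F z) with hpos | hneg
  · nlinarith [hconv.sub_sqrt_le_fderiv_sqrt_add_sq_apply_self hF0 hd hε hpos, hlow z,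
      Real.sqrt_le_one.2 hε1.le, le_abs_self c₂, div_nonneg (abs_nonneg c₂) hc₁.le]
  · have hzR : ‖z‖ ≤ |c₂| / c₁ := by
      rw [le_div_iff₀ hc₁]
      linarith [hlow z, le_abs_self c₂]
    linarith [neg_abs_le (fderiv ℝ (fun w => √(ε + F w ^ 2)) z z), hlow z, le_abs_self c₂,
      mul_le_mul_of_nonneg_left hzR hc₆.le]

/-- Uniform radial derivative bounds for the regularizations `F_ε(z) = √(ε + F(z)²)`:
there are `c₄, c₆ > 0` and `c₅ ∈ ℝ` with
`c₄|z| − c₅ ≤ ⟨F_ε'(z), z⟩ ≤ c₆(1 + |z|)` for all `z` and all `0 < ε < 1`. -/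
theorem radial_derivative_bounds
    {V : Type*} [NormedAddCommGroup V] [InnerProductSpace ℝ V] [FiniteDimensional ℝ V]
    (F : V → ℝ) (hconv : ConvexOn ℝ Set.univ F)
    (c₁ c₂ c₃ : ℝ) (hc₁ : 0 < c₁) (hc₃ : 0 < c₃)
    (hlow : ∀ z : V, c₁ * ‖z‖ - c₂ ≤ F z)
    (hup : ∀ z : V, F z ≤ c₃ * (1 + ‖z‖))
    (hF0 : F 0 = 0)
    (hC1 : ContDiffOn ℝ 1 F ({(0 : V)}ᶜ)) :
    ∃ c₄ c₆ : ℝ, 0 < c₄ ∧ 0 < c₆ ∧ ∃ c₅ : ℝ,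
      ∀ (ε : ℝ), 0 < ε → ε < 1 → ∀ z : V,
        c₄ * ‖z‖ - c₅ ≤ fderiv ℝ (fun w : V => Real.sqrt (ε + (F w) ^ 2)) z z ∧
        fderiv ℝ (fun w : V => Real.sqrt (ε + (F w) ^ 2)) z z ≤ c₆ * (1 + ‖z‖) :=
  radial_derivative_bounds_general F hconv c₁ c₂ c₃ hc₁ hc₃ hlow hup hF0 hC1
end

section
/- The linear perspective integrand of a convex linear-growth function is continuous, positively 1-homogeneous, and of linear growth: given convex F : W → ℝ with c₁|z| − c₂ ≤ F(z) ≤ c₃(1 + |z|), define F^#(t, z) := t·F(z/t) for t > 0 and F^#(0, z) := F^∞(z). Then F^# : [0,∞) × W → ℝ is continuous, satisfies F^#(λt, λz) = λ·F^#(t, z) for all λ ≥ 0, and is convex on [0,∞) × W. -/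
/-!
A convex `F` with `F z ≤ c₃ (1 + ‖z‖)` is `c₃`-Lipschitz: along a ray from `z` through `w` the
difference quotients of `F` increase, and the growth bound caps them by `c₃` at infinity. Hence
each slice `z ↦ t F(z/t)` and their pointwise limit `F^∞` are `c₃`-Lipschitz, so continuity of
`F^#` reduces to continuity in `t`, which at `t = 0` is the definition of `F^∞`. The perspective
`t F(z/t)` of a convex function is convex on the open half-space `t > 0`, and convexity passes to
its closure by continuity. Homogeneity is a rescaling of `t`, and the growth bound follows from the
Lipschitz bound in `z` together with `F^#(t, 0) = t F(0)`.
-/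

open Filter Topology Set
open scoped NNReal

section ConvexClosure

variable {E : Type*} [AddCommGroup E] [Module ℝ E] [TopologicalSpace E]
  [IsTopologicalAddGroup E] [ContinuousSMul ℝ E] {s : Set E} {f : E → ℝ}

theorem ConvexOn.closure_of_continuousOn (hf : ConvexOn ℝ s f)
    (hcont : ContinuousOn f (closure s)) : ConvexOn ℝ (closure s) f := by
  refine ⟨hf.1.closure, fun x hx y hy a b ha hb hab => ?_⟩
  have hxy : (x, y) ∈ closure (s ×ˢ s) := by
    rw [closure_prod_eq]
    exact ⟨hx, hy⟩
  have hmaps : MapsTo (fun p : E × E => a • p.1 + b • p.2) (s ×ˢ s) (closure s) :=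
    fun p hp => subset_closure (hf.1 hp.1 hp.2 ha hb hab)
  refine ContinuousWithinAt.closure_le (f := fun p : E × E => f (a • p.1 + b • p.2))
    (g := fun p => a • f p.1 + b • f p.2) hxy ?_ ?_ fun p hp => hf.2 hp.1 hp.2 ha hb hab
  · have hlin : Continuous fun p : E × E => a • p.1 + b • p.2 := by fun_prop
    exact ContinuousWithinAt.comp (f := fun p : E × E => a • p.1 + b • p.2)
      (hcont _ (hf.1.closure hx hy ha hb hab)) hlin.continuousWithinAt hmaps
  · have hfst : ContinuousWithinAt (fun p : E × E => f p.1) (s ×ˢ s) (x, y) :=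
      (hcont x hx).comp continuousWithinAt_fst fun p hp => subset_closure hp.1
    have hsnd : ContinuousWithinAt (fun p : E × E => f p.2) (s ×ˢ s) (x, y) :=
      (hcont y hy).comp continuousWithinAt_snd fun p hp => subset_closure hp.2
    exact (hfst.const_smul a).add (hsnd.const_smul b)

end ConvexClosure

theorem LipschitzWith.of_tendsto {ι α β : Type*} [PseudoMetricSpace α] [PseudoMetricSpace β]
    {l : Filter ι} [l.NeBot] {F : ι → α → β} {g : α → β} {K : ℝ≥0}
    (hF : ∀ᶠ i in l, LipschitzWith K (F i)) (hg : ∀ x, Tendsto (fun i => F i x) l (𝓝 (g x))) :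
    LipschitzWith K g :=
  LipschitzWith.of_dist_le_mul fun x y =>
    le_of_tendsto ((hg x).dist (hg y)) (hF.mono fun _ hi => hi.dist_le_mul x y)

section Perspective

variable {E : Type*} [NormedAddCommGroup E] [NormedSpace ℝ E] {f g : E → ℝ}

theorem ConvexOn.sub_le_mul_norm_sub {c : ℝ} (hf : ConvexOn ℝ univ f) (hc : 0 ≤ c)
    (hup : ∀ z, f z ≤ c * (1 + ‖z‖)) (z w : E) : f w - f z ≤ c * ‖w - z‖ := by
  set v := w - z
  -- `w` lies on the segment from `z` to `z + s • v` at parameter `s⁻¹`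
  have hquot : ∀ s : ℝ, 1 ≤ s → f w - f z ≤ c * ‖v‖ + (c * (1 + ‖z‖) - f z) / s := by
    intro s hs
    have hs0 : 0 < s := by linarith
    have hw : s⁻¹ • (z + s • v) + (1 - s⁻¹) • z = w := by
      rw [smul_add, smul_smul, inv_mul_cancel₀ hs0.ne', one_smul]
      module
    have hconvex := hf.2 (mem_univ (z + s • v)) (mem_univ z) (show 0 ≤ s⁻¹ by positivity)
      (sub_nonneg.2 (inv_le_one_of_one_le₀ hs)) (by ring)
    rw [hw, smul_eq_mul, smul_eq_mul] at hconvex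
    have hbound : f (z + s • v) ≤ c * (1 + ‖z‖) + s * (c * ‖v‖) :=
      calc f (z + s • v) ≤ c * (1 + ‖z + s • v‖) := hup _
        _ ≤ c * (1 + (‖z‖ + s * ‖v‖)) := by
          gcongr
          simpa [norm_smul, abs_of_pos hs0] using norm_add_le z (s • v)
        _ = c * (1 + ‖z‖) + s * (c * ‖v‖) := by ring
    calc f w - f z ≤ s⁻¹ * (f (z + s • v) - f z) := by linarith
      _ ≤ s⁻¹ * (c * (1 + ‖z‖) + s * (c * ‖v‖) - f z) := by gcongr
      _ = c * ‖v‖ + (c * (1 + ‖z‖) - f z) / s := by field_simp; ring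
  have hlim : Tendsto (fun s : ℝ => c * ‖v‖ + (c * (1 + ‖z‖) - f z) / s) atTop (𝓝 (c * ‖v‖)) := by
    simpa using (tendsto_const_nhds (x := c * ‖v‖)).add
      ((tendsto_const_nhds (x := c * (1 + ‖z‖) - f z)).div_atTop tendsto_id)
  exact ge_of_tendsto hlim ((eventually_ge_atTop 1).mono hquot)

theorem ConvexOn.lipschitzWith_of_le_mul_one_add_norm {c : ℝ} (hf : ConvexOn ℝ univ f)
    (hc : 0 ≤ c) (hup : ∀ z, f z ≤ c * (1 + ‖z‖)) : LipschitzWith (Real.toNNReal c) f := by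
  refine LipschitzWith.of_dist_le_mul fun x y => ?_
  rw [Real.dist_eq, dist_eq_norm, Real.coe_toNNReal _ hc, abs_sub_le_iff]
  exact ⟨hf.sub_le_mul_norm_sub hc hup y x,
    norm_sub_rev x y ▸ hf.sub_le_mul_norm_sub hc hup x y⟩

theorem ConvexOn.mul_comp_inv_smul (hf : ConvexOn ℝ univ f) :
    ConvexOn ℝ (Ioi 0 ×ˢ univ) fun p : ℝ × E => p.1 * f (p.1⁻¹ • p.2) := by
  refine ⟨(convex_Ioi 0).prod convex_univ, ?_⟩
  rintro ⟨t, x⟩ ⟨ht, -⟩ ⟨s, y⟩ ⟨hs, -⟩ a b ha hb hab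
  rw [mem_Ioi] at ht hs
  set μ := a * t + b * s
  have hμ : 0 < μ := by
    nlinarith [mul_le_mul_of_nonneg_left (min_le_left t s) ha,
      mul_le_mul_of_nonneg_left (min_le_right t s) hb, lt_min ht hs]
  have hcomb : (a * t / μ) • (t⁻¹ • x) + (b * s / μ) • (s⁻¹ • y) = μ⁻¹ • (a • x + b • y) := by
    rw [smul_smul, smul_smul, smul_add, smul_smul, smul_smul]
    congr 2 <;> field_simp
  have h := hf.2 (mem_univ (t⁻¹ • x)) (mem_univ (s⁻¹ • y)) (show 0 ≤ a * t / μ by positivity)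
    (show 0 ≤ b * s / μ by positivity) (by rw [← add_div, div_self hμ.ne'])
  rw [hcomb, smul_eq_mul, smul_eq_mul] at h
  simp only [Prod.smul_mk, Prod.mk_add_mk, smul_eq_mul]
  calc μ * f (μ⁻¹ • (a • x + b • y))
      ≤ μ * (a * t / μ * f (t⁻¹ • x) + b * s / μ * f (s⁻¹ • y)) := by gcongr
    _ = a * (t * f (t⁻¹ • x)) + b * (s * f (s⁻¹ • y)) := by field_simp

theorem LipschitzWith.mul_comp_inv_smul {K : ℝ≥0} (hf : LipschitzWith K f) {t : ℝ} (ht : 0 < t) :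
    LipschitzWith K fun z => t * f (t⁻¹ • z) := by
  refine LipschitzWith.of_dist_le_mul fun x y => ?_
  calc dist (t * f (t⁻¹ • x)) (t * f (t⁻¹ • y)) = t * dist (f (t⁻¹ • x)) (f (t⁻¹ • y)) := by
        rw [Real.dist_eq, Real.dist_eq, ← mul_sub, abs_mul, abs_of_pos ht]
    _ ≤ t * (K * dist (t⁻¹ • x) (t⁻¹ • y)) := by gcongr; exact hf.dist_le_mul _ _
    _ = K * dist x y := by
        rw [dist_smul₀, Real.norm_eq_abs, abs_of_pos (inv_pos.2 ht)]
        field_simp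

def IsRecessionFunction (f g : E → ℝ) : Prop :=
  ∀ z, Tendsto (fun t : ℝ => t * f (t⁻¹ • z)) (𝓝[>] 0) (𝓝 (g z))

/-- The value `g p.2` is meant for `p.1 = 0`; for `p.1 < 0` it is junk. -/
noncomputable def perspective (f g : E → ℝ) (p : ℝ × E) : ℝ :=
  if 0 < p.1 then p.1 * f (p.1⁻¹ • p.2) else g p.2

theorem perspective_of_pos {t : ℝ} (ht : 0 < t) (z : E) :
    perspective f g (t, z) = t * f (t⁻¹ • z) :=
  if_pos ht

theorem perspective_of_nonpos {t : ℝ} (ht : t ≤ 0) (z : E) : perspective f g (t, z) = g z :=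
  if_neg ht.not_gt

theorem ConvexOn.convexOn_perspective (hf : ConvexOn ℝ univ f)
    (hcont : ContinuousOn (perspective f g) (Ici 0 ×ˢ univ)) :
    ConvexOn ℝ (Ici 0 ×ˢ univ) (perspective f g) := by
  have hclosure : closure (Ioi (0 : ℝ) ×ˢ (univ : Set E)) = Ici 0 ×ˢ univ := by
    rw [closure_prod_eq, closure_Ioi, closure_univ]
  rw [← hclosure] at hcont ⊢
  refine ConvexOn.closure_of_continuousOn (hf.mul_comp_inv_smul.congr fun p hp => ?_) hcont
  exact (perspective_of_pos (mem_Ioi.1 hp.1) p.2).symm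

namespace IsRecessionFunction

theorem map_zero (hg : IsRecessionFunction f g) : g 0 = 0 := by
  refine tendsto_nhds_unique (hg 0) ?_
  simpa using ((tendsto_id (x := 𝓝[>] (0 : ℝ))).mono_right nhdsWithin_le_nhds).mul_const (f 0)

theorem map_smul (hg : IsRecessionFunction f g) {r : ℝ} (hr : 0 < r) (z : E) :
    g (r • z) = r * g z := by
  have hscale : Tendsto (fun t : ℝ => r * t) (𝓝[>] 0) (𝓝[>] 0) := by
    refine tendsto_nhdsWithin_of_tendsto_nhds_of_eventually_within _ ?_
      (eventually_nhdsWithin_of_forall fun t ht => mul_pos hr ht)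
    simpa using (tendsto_id.const_mul r).mono_left (nhdsWithin_le_nhds (a := (0 : ℝ)))
  refine tendsto_nhds_unique ((hg (r • z)).comp hscale) ?_
  refine ((hg z).const_mul r).congr' (eventually_nhdsWithin_of_forall fun t _ => ?_)
  simp only [Function.comp_apply, smul_smul, mul_inv_rev]
  rw [inv_mul_cancel_right₀ hr.ne', mul_assoc]

theorem lipschitzWith (hg : IsRecessionFunction f g) {K : ℝ≥0} (hf : LipschitzWith K f) :
    LipschitzWith K g :=
  LipschitzWith.of_tendsto (l := 𝓝[>] 0)
    (eventually_nhdsWithin_of_forall fun _ ht => hf.mul_comp_inv_smul ht) hg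

theorem perspective_zero_right (hg : IsRecessionFunction f g) {t : ℝ} (ht : 0 ≤ t) :
    perspective f g (t, 0) = t * f 0 := by
  rcases ht.eq_or_lt with rfl | ht
  · rw [perspective_of_nonpos le_rfl, hg.map_zero, zero_mul]
  · rw [perspective_of_pos ht, smul_zero]

theorem perspective_smul (hg : IsRecessionFunction f g) {r : ℝ} (hr : 0 ≤ r) (p : ℝ × E) :
    perspective f g (r • p) = r * perspective f g p := by
  obtain ⟨t, z⟩ := p
  rcases hr.eq_or_lt with rfl | hr
  · rw [zero_smul, zero_mul, ← Prod.mk_zero_zero, perspective_of_nonpos le_rfl, hg.map_zero]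
  rw [Prod.smul_mk, smul_eq_mul]
  rcases lt_or_ge 0 t with ht | ht
  · rw [perspective_of_pos (mul_pos hr ht), perspective_of_pos ht, smul_smul, mul_inv_rev,
      inv_mul_cancel_right₀ hr.ne']
    ring
  · rw [perspective_of_nonpos (mul_nonpos_of_nonneg_of_nonpos hr.le ht),
      perspective_of_nonpos ht, hg.map_smul hr]

theorem continuousOn_perspective_left (hg : IsRecessionFunction f g) (hf : Continuous f)
    (z : E) : ContinuousOn (fun t => perspective f g (t, z)) (Ici 0) := by
  intro t ht
  rcases (mem_Ici.1 ht).eq_or_lt with rfl | ht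
  · rw [← continuousWithinAt_Ioi_iff_Ici, ContinuousWithinAt, perspective_of_nonpos le_rfl]
    exact (hg z).congr' (eventually_nhdsWithin_of_forall fun t ht => (perspective_of_pos ht z).symm)
  · have hcont : ContinuousAt (fun t : ℝ => t * f (t⁻¹ • z)) t := by
      fun_prop (disch := exact ht.ne')
    exact (hcont.congr (eventuallyEq_of_mem (Ioi_mem_nhds ht)
      fun s hs => (perspective_of_pos hs z).symm)).continuousWithinAt

theorem lipschitzWith_perspective_right (hg : IsRecessionFunction f g) {K : ℝ≥0}
    (hf : LipschitzWith K f) {t : ℝ} (ht : 0 ≤ t) :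
    LipschitzWith K fun z => perspective f g (t, z) := by
  rcases ht.eq_or_lt with rfl | ht
  · simpa only [perspective_of_nonpos le_rfl] using hg.lipschitzWith hf
  · simpa only [perspective_of_pos ht] using hf.mul_comp_inv_smul ht

theorem continuousOn_perspective (hg : IsRecessionFunction f g) {K : ℝ≥0}
    (hf : LipschitzWith K f) : ContinuousOn (perspective f g) (Ici 0 ×ˢ univ) :=
  continuousOn_prod_of_continuousOn_lipschitzOnWith' _ K
    (fun _ ht => (hg.lipschitzWith_perspective_right hf ht).lipschitzOnWith)
    (fun z _ => hg.continuousOn_perspective_left hf.continuous z)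

theorem abs_perspective_le (hg : IsRecessionFunction f g) {K : ℝ≥0} (hf : LipschitzWith K f)
    {t : ℝ} (ht : 0 ≤ t) (z : E) : |perspective f g (t, z)| ≤ K * ‖z‖ + t * |f 0| := by
  have hlip := (hg.lipschitzWith_perspective_right hf ht).dist_le_mul z 0
  rw [Real.dist_eq, dist_zero_right, hg.perspective_zero_right ht] at hlip
  have htriangle := abs_sub_abs_le_abs_sub (perspective f g (t, z)) (t * f 0)
  rw [abs_mul, abs_of_nonneg ht] at htriangle
  linarith

end IsRecessionFunction

end Perspective

theorem perspective_integrand_properties_general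
    {W : Type*} [NormedAddCommGroup W] [InnerProductSpace ℝ W]
    (F : W → ℝ) (hconv : ConvexOn ℝ Set.univ F)
    (c₃ : ℝ) (hc₃ : 0 < c₃)
    (hup : ∀ z : W, F z ≤ c₃ * (1 + ‖z‖))
    (Finf : W → ℝ)
    (hFinf : ∀ z : W, Tendsto (fun t : ℝ => t * F (t⁻¹ • z))
      (nhdsWithin (0 : ℝ) (Set.Ioi 0)) (nhds (Finf z)))
    (Fp : ℝ × W → ℝ)
    (hFp : ∀ p : ℝ × W, Fp p = if 0 < p.1 then p.1 * F (p.1⁻¹ • p.2) else Finf p.2) :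
    ContinuousOn Fp (Set.Ici (0 : ℝ) ×ˢ (Set.univ : Set W)) ∧
    (∀ lam : ℝ, 0 ≤ lam → ∀ t : ℝ, 0 ≤ t → ∀ z : W,
      Fp (lam * t, lam • z) = lam * Fp (t, z)) ∧
    ConvexOn ℝ (Set.Ici (0 : ℝ) ×ˢ (Set.univ : Set W)) Fp ∧
    (∃ C : ℝ, 0 < C ∧ ∀ t : ℝ, 0 ≤ t → ∀ z : W, |Fp (t, z)| ≤ C * (t + ‖z‖)) := by
  obtain rfl : Fp = perspective F Finf := funext hFp
  have hrec : IsRecessionFunction F Finf := hFinf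
  have hlip := hconv.lipschitzWith_of_le_mul_one_add_norm hc₃.le hup
  have hcont := hrec.continuousOn_perspective hlip
  refine ⟨hcont, fun lam hlam t _ z => hrec.perspective_smul hlam (t, z),
    hconv.convexOn_perspective hcont, c₃ + |F 0|, by positivity, fun t ht z => ?_⟩
  have hbound := hrec.abs_perspective_le hlip ht z
  rw [Real.coe_toNNReal _ hc₃.le] at hbound
  nlinarith [mul_nonneg hc₃.le ht, mul_nonneg (abs_nonneg (F 0)) (norm_nonneg z)]

/-- The linear perspective integrand `F^#(t,z) = t·F(z/t)` (for `t > 0`), extended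
by the recession function `F^#(0,z) = F^∞(z)`, is continuous on `[0,∞) × W`,
positively 1-homogeneous, convex on `[0,∞) × W`, and of linear growth. -/
theorem perspective_integrand_properties
    {W : Type*} [NormedAddCommGroup W] [InnerProductSpace ℝ W] [FiniteDimensional ℝ W]
    (F : W → ℝ) (hconv : ConvexOn ℝ Set.univ F)
    (c₁ c₂ c₃ : ℝ) (hc₁ : 0 < c₁) (hc₃ : 0 < c₃)
    (hlow : ∀ z : W, c₁ * ‖z‖ - c₂ ≤ F z)
    (hup : ∀ z : W, F z ≤ c₃ * (1 + ‖z‖))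
    (Finf : W → ℝ)
    (hFinf : ∀ z : W, Tendsto (fun t : ℝ => t * F (t⁻¹ • z))
      (nhdsWithin (0 : ℝ) (Set.Ioi 0)) (nhds (Finf z)))
    (Fp : ℝ × W → ℝ)
    (hFp : ∀ p : ℝ × W, Fp p = if 0 < p.1 then p.1 * F (p.1⁻¹ • p.2) else Finf p.2) :
    ContinuousOn Fp (Set.Ici (0 : ℝ) ×ˢ (Set.univ : Set W)) ∧
    (∀ lam : ℝ, 0 ≤ lam → ∀ t : ℝ, 0 ≤ t → ∀ z : W,
      Fp (lam * t, lam • z) = lam * Fp (t, z)) ∧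
    ConvexOn ℝ (Set.Ici (0 : ℝ) ×ˢ (Set.univ : Set W)) Fp ∧
    (∃ C : ℝ, 0 < C ∧ ∀ t : ℝ, 0 ≤ t → ∀ z : W, |Fp (t, z)| ≤ C * (t + ‖z‖)) :=
  perspective_integrand_properties_general F hconv c₃ hc₃ hup Finf hFinf Fp hFp
end
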